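/- Let X be a countable type. Let Ξ and Θ be countable index types, let (w ξ)_{ξ:Ξ} be nonnegative reals with Σ_ξ w ξ = 1, let (P ξ)_{ξ:Ξ} be PMFs on X, and let (G θ)_{θ:Θ} be functions X → ℝ≥0 such that the likelihood L(x) := Σ_θ G θ x and the normalizer Z := Σ_x (Σ_ξ w ξ · P ξ x) · L(x) satisfy 0 < Z < ∞. For each pair (ξ,θ) let Z_{ξ,θ} := Σ_x P ξ x · G θ x, and whenever Z_{ξ,θ} > 0 let P̂_{ξ,θ} be the PMF x ↦ P ξ x · G θ x / Z_{ξ,θ}. Then the Bayes posterior PMF x ↦ (Σ_ξ w ξ · P ξ x) · L(x) / Z equals the mixture Σ_{(ξ,θ)} ŵ(ξ,θ) · P̂_{ξ,θ}, where ŵ(ξ,θ) := w ξ · Z_{ξ,θ} / Z (with the (ξ,θ)-term omitted when Z_{ξ,θ} = 0), and the weights ŵ sum to 1. -/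
import Mathlib


open scoped ENNReal NNReal

/-- Mixture conjugacy of the Bayes update: a prior that is a mixture `Σ_ξ w ξ • P ξ`
of PMFs, updated with a likelihood `L = Σ_θ G θ` that is a sum of nonnegative
per-association factors (with normalizer `Z` satisfying `0 < Z < ∞`), yields a
posterior that is again a mixture, indexed by pairs `(ξ,θ)`, with weights
`ŵ(ξ,θ) = w ξ · Z_{ξ,θ} / Z` (the `(ξ,θ)`-term vanishing when `Z_{ξ,θ} = 0`) and
components `P̂_{ξ,θ} ∝ P ξ · G θ`; moreover the weights `ŵ` sum to `1`. -/
theorem bayes_posterior_mixture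
    {X : Type*} [Countable X] {Ξ Θ : Type*} [Countable Ξ] [Countable Θ]
    (w : Ξ → ℝ≥0) (hw : ∑' ξ, (w ξ : ℝ≥0∞) = 1)
    (P : Ξ → PMF X) (G : Θ → X → ℝ≥0)
    (hZpos : 0 < ∑' x, (∑' ξ, (w ξ : ℝ≥0∞) * P ξ x) * ∑' θ, (G θ x : ℝ≥0∞))
    (hZfin : (∑' x, (∑' ξ, (w ξ : ℝ≥0∞) * P ξ x) * ∑' θ, (G θ x : ℝ≥0∞)) ≠ ⊤)
    (Phat : Ξ → Θ → PMF X)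
    (hPhat : ∀ ξ θ, (∑' x, P ξ x * (G θ x : ℝ≥0∞)) ≠ 0 →
      (∑' x, P ξ x * (G θ x : ℝ≥0∞)) ≠ ⊤ →
      ∀ x, Phat ξ θ x = P ξ x * (G θ x : ℝ≥0∞) / ∑' y, P ξ y * (G θ y : ℝ≥0∞))
    (post : PMF X)
    (hpost : ∀ x, post x =
      (∑' ξ, (w ξ : ℝ≥0∞) * P ξ x) * (∑' θ, (G θ x : ℝ≥0∞)) /
        ∑' y, (∑' ξ, (w ξ : ℝ≥0∞) * P ξ y) * ∑' θ, (G θ y : ℝ≥0∞)) :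
    (∀ x, post x = ∑' ξθ : Ξ × Θ,
        ((w ξθ.1 : ℝ≥0∞) * (∑' y, P ξθ.1 y * (G ξθ.2 y : ℝ≥0∞)) /
            ∑' y, (∑' ξ, (w ξ : ℝ≥0∞) * P ξ y) * ∑' θ, (G θ y : ℝ≥0∞)) *
          Phat ξθ.1 ξθ.2 x) ∧
      (∑' ξθ : Ξ × Θ,
        (w ξθ.1 : ℝ≥0∞) * (∑' y, P ξθ.1 y * (G ξθ.2 y : ℝ≥0∞)) /
          ∑' y, (∑' ξ, (w ξ : ℝ≥0∞) * P ξ y) * ∑' θ, (G θ y : ℝ≥0∞)) = 1 := by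
  set Z := ∑' x, (∑' ξ, (w ξ : ℝ≥0∞) * P ξ x) * ∑' θ, (G θ x : ℝ≥0∞) with hZ
  have expand : ∀ x, (∑' ξ, (w ξ : ℝ≥0∞) * P ξ x) * (∑' θ, (G θ x : ℝ≥0∞))
      = ∑' ξθ : Ξ × Θ, (w ξθ.1 : ℝ≥0∞) * (P ξθ.1 x * (G ξθ.2 x : ℝ≥0∞)) := by
    intro x
    rw [ENNReal.tsum_prod (f := fun ξ θ => (w ξ : ℝ≥0∞) * (P ξ x * (G θ x : ℝ≥0∞))),
      ← ENNReal.tsum_mul_right]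
    refine tsum_congr fun ξ => ?_
    rw [← ENNReal.tsum_mul_left]
    exact tsum_congr fun θ => by ring
  have key : Z = ∑' ξθ : Ξ × Θ, (w ξθ.1 : ℝ≥0∞) * ∑' y, P ξθ.1 y * (G ξθ.2 y : ℝ≥0∞) := by
    calc Z = ∑' x, ∑' ξθ : Ξ × Θ, (w ξθ.1 : ℝ≥0∞) * (P ξθ.1 x * (G ξθ.2 x : ℝ≥0∞)) :=
          tsum_congr expand
      _ = ∑' ξθ : Ξ × Θ, ∑' x, (w ξθ.1 : ℝ≥0∞) * (P ξθ.1 x * (G ξθ.2 x : ℝ≥0∞)) :=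
          ENNReal.tsum_comm
      _ = _ := tsum_congr fun ξθ => ENNReal.tsum_mul_left
  have term : ∀ ξ θ x, ((w ξ : ℝ≥0∞) * (∑' y, P ξ y * (G θ y : ℝ≥0∞)) / Z) * Phat ξ θ x
      = (w ξ : ℝ≥0∞) * (P ξ x * (G θ x : ℝ≥0∞)) / Z := by
    intro ξ θ x
    by_cases hw0 : (w ξ : ℝ≥0∞) = 0
    · simp [hw0]
    by_cases hz0 : (∑' y, P ξ y * (G θ y : ℝ≥0∞)) = 0
    · have hx : P ξ x * (G θ x : ℝ≥0∞) = 0 := by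
        have h := ENNReal.tsum_eq_zero.mp hz0 x
        exact h
      simp [hz0, hx]
    have hle : (w ξ : ℝ≥0∞) * (∑' y, P ξ y * (G θ y : ℝ≥0∞)) ≤ Z := by
      rw [key]; exact ENNReal.le_tsum (ξ, θ)
    have hzt : (∑' y, P ξ y * (G θ y : ℝ≥0∞)) ≠ ⊤ := by
      intro h
      rw [h, ENNReal.mul_top hw0] at hle
      exact hZfin (top_le_iff.mp hle)
    rw [hPhat ξ θ hz0 hzt x]
    have hcancel : (∑' y, P ξ y * (G θ y : ℝ≥0∞)) * (∑' y, P ξ y * (G θ y : ℝ≥0∞))⁻¹ = 1 :=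
      ENNReal.mul_inv_cancel hz0 hzt
    calc ((w ξ : ℝ≥0∞) * (∑' y, P ξ y * (G θ y : ℝ≥0∞)) / Z)
          * (P ξ x * (G θ x : ℝ≥0∞) / ∑' y, P ξ y * (G θ y : ℝ≥0∞))
        = ((w ξ : ℝ≥0∞) * (P ξ x * (G θ x : ℝ≥0∞)) / Z)
          * ((∑' y, P ξ y * (G θ y : ℝ≥0∞)) * (∑' y, P ξ y * (G θ y : ℝ≥0∞))⁻¹) := by
          rw [div_eq_mul_inv, div_eq_mul_inv, div_eq_mul_inv]; ring
      _ = _ := by rw [hcancel, mul_one]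
  constructor
  · intro x
    rw [hpost x]
    refine Eq.trans ?_ (tsum_congr fun ξθ => (term ξθ.1 ξθ.2 x).symm)
    simp only [div_eq_mul_inv]
    rw [ENNReal.tsum_mul_right]
    congr 1
    exact expand x
  · simp only [div_eq_mul_inv]
    rw [ENNReal.tsum_mul_right, ← key]
    exact ENNReal.mul_inv_cancel hZpos.ne' hZfin
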